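/- arXiv:1411.3288 — 3 statements merged into one kernel-verified Lean document; each statement's English description precedes it below -/
import Mathlib

section
/- For λ ≠ 0, the map Φ(x,y,u,p,q) = (y, x, λu, λq, λp) on C^5 transforms the PDE system u_{11} = p², u_{12} = 0, u_{22} = λq² into the system u_{11} = p², u_{12} = 0, u_{22} = (1/λ)q²; i.e. it maps the pair of distributions (E_λ, V) of S_λ onto the pair (E_{1/λ}, V) of S_{1/λ}, where E_μ = span{∂_x + p∂_u + p²∂_p, ∂_y + q∂_u + μq²∂_q} and V = span{∂_p, ∂_q}. -/
/-- `D_1 = ∂_x + p∂_u + p²∂_p` for the system `S_μ`.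
Coordinates on `ℂ^5`: `(x, y, u, p, q) = (z 0, z 1, z 2, z 3, z 4)`. -/
noncomputable def D1 : (Fin 5 → ℂ) → Fin 5 → ℂ :=
  fun z => ![1, 0, z 3, (z 3) ^ 2, 0]

/-- `D_2 = ∂_y + q∂_u + μq²∂_q` for the system `S_μ`. -/
noncomputable def D2 (mu : ℂ) : (Fin 5 → ℂ) → Fin 5 → ℂ :=
  fun z => ![0, 1, z 4, 0, mu * (z 4) ^ 2]

/-- The map `Φ(x,y,u,p,q) = (y, x, λu, λq, λp)`. -/
noncomputable def PhiS (lam : ℂ) : (Fin 5 → ℂ) → Fin 5 → ℂ :=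
  fun z => ![z 1, z 0, lam * z 2, lam * z 4, lam * z 3]

/-! `Φ` is linear, so its differential at every point is `Φ` itself and the theorem reduces
to computing `Φ` on the spanning vectors: it swaps `D_1 ↔ D_2` (turning `λ` into `1/λ`)
and `∂_p ↔ ∂_q` up to the factor `λ`. -/

theorem Submodule.span_pair_smul_of_isUnit {R M : Type*} [Semiring R] [AddCommMonoid M]
    [Module R M] {c : R} (hc : IsUnit c) (x y : M) :
    Submodule.span R {c • x, c • y} = Submodule.span R {x, y} := by
  rw [← Submodule.span_smul_eq_of_isUnit {x, y} c hc, Set.smul_set_insert,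
    Set.smul_set_singleton]

noncomputable def PhiSCLM (lam : ℂ) : (Fin 5 → ℂ) →L[ℂ] (Fin 5 → ℂ) :=
  LinearMap.toContinuousLinearMap
    { toFun := PhiS lam
      map_add' := fun a b => by
        funext i
        fin_cases i <;> simp [PhiS] <;> ring
      map_smul' := fun c a => by
        funext i
        fin_cases i <;> simp [PhiS] <;> ring }

theorem coe_PhiSCLM (lam : ℂ) : ⇑(PhiSCLM lam) = PhiS lam := rfl

theorem fderiv_PhiS (lam : ℂ) (z : Fin 5 → ℂ) : fderiv ℂ (PhiS lam) z = PhiSCLM lam := by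
  rw [← coe_PhiSCLM, ContinuousLinearMap.fderiv]

theorem PhiS_D1 {lam : ℂ} (hlam : lam ≠ 0) (z : Fin 5 → ℂ) :
    PhiS lam (D1 z) = D2 (1 / lam) (PhiS lam z) := by
  funext i
  fin_cases i <;> simp [PhiS, D1, D2]
  field_simp

theorem PhiS_D2 (lam : ℂ) (z : Fin 5 → ℂ) : PhiS lam (D2 lam z) = D1 (PhiS lam z) := by
  funext i
  fin_cases i <;> simp [PhiS, D1, D2]
  ring

theorem PhiS_single_three (lam : ℂ) :
    PhiS lam (Pi.single 3 1) = lam • (Pi.single 4 1 : Fin 5 → ℂ) := by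
  funext i
  fin_cases i <;> simp [PhiS]

theorem PhiS_single_four (lam : ℂ) :
    PhiS lam (Pi.single 4 1) = lam • (Pi.single 3 1 : Fin 5 → ℂ) := by
  funext i
  fin_cases i <;> simp [PhiS]

/-- **The map `Φ(x,y,u,p,q) = (y,x,λu,λq,λp)` transforms `S_λ` into `S_{1/λ}`:**
its differential maps `E_λ = span{D_1, D_2^λ}` onto `E_{1/λ}` at the image point, and
preserves `V = span{∂_p, ∂_q}`. -/
theorem S_lambda_equiv_S_inv_lambda (lam : ℂ) (hlam : lam ≠ 0) :
    ∀ z : Fin 5 → ℂ,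
      Submodule.map (fderiv ℂ (PhiS lam) z).toLinearMap (Submodule.span ℂ {D1 z, D2 lam z})
        = Submodule.span ℂ {D1 (PhiS lam z), D2 (1 / lam) (PhiS lam z)} ∧
      Submodule.map (fderiv ℂ (PhiS lam) z).toLinearMap
          (Submodule.span ℂ {(Pi.single 3 1 : Fin 5 → ℂ), Pi.single 4 1})
        = Submodule.span ℂ {(Pi.single 3 1 : Fin 5 → ℂ), Pi.single 4 1} := by
  intro z
  simp only [fderiv_PhiS, Submodule.map_span, Set.image_pair, ContinuousLinearMap.coe_coe,
    coe_PhiSCLM, PhiS_D1 hlam, PhiS_D2, PhiS_single_three, PhiS_single_four]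
  rw [Submodule.span_pair_smul_of_isUnit (IsUnit.mk0 lam hlam)]
  exact ⟨by rw [Set.pair_comm], by rw [Set.pair_comm]⟩
end

section
/- For every a, b, c ∈ C, the function u(x,y) = −ay + c − b(x+a)² solves the PDE system u_{xx} = u_x/(x − u_y), u_{xy} = 0, u_{yy} = 0 (on the domain where x ≠ u_y), and conversely every local solution of this system is of this form. -/
/-!
Since `u_xy = u_yy = 0` and second derivatives commute, `u_y` has zero gradient, so on the
connected open set it is a constant `-a`. Then `w = u_x` satisfies `w_y = 0` and
`w_x = w / (x + a)`, so `w / (x + a)` has zero gradient and `w = k (x + a)`. Finally `u` and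
`-a y - (k/2) (x + a)²` have the same gradient, hence differ by a constant.
-/

/-- Partial derivative in the `x`-direction of a function on `ℂ × ℂ`. -/
noncomputable def ddx (f : ℂ × ℂ → ℂ) : ℂ × ℂ → ℂ := fun z => fderiv ℂ f z (1, 0)

/-- Partial derivative in the `y`-direction of a function on `ℂ × ℂ`. -/
noncomputable def ddy (f : ℂ × ℂ → ℂ) : ℂ × ℂ → ℂ := fun z => fderiv ℂ f z (0, 1)

open Set

section PartialDerivatives

variable {f g : ℂ × ℂ → ℂ} {z : ℂ × ℂ} {U : Set (ℂ × ℂ)}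

theorem ddx_eq_deriv (hf : DifferentiableAt ℂ f z) :
    ddx f z = deriv (fun x => f (x, z.2)) z.1 :=
  (hf.hasFDerivAt.comp_hasDerivAt z.1
    ((hasDerivAt_id _).prodMk (hasDerivAt_const _ _))).deriv.symm

theorem ddy_eq_deriv (hf : DifferentiableAt ℂ f z) :
    ddy f z = deriv (fun y => f (z.1, y)) z.2 :=
  (hf.hasFDerivAt.comp_hasDerivAt z.2
    ((hasDerivAt_const _ _).prodMk (hasDerivAt_id _))).deriv.symm

theorem fderiv_eq_of_ddx_eq_of_ddy_eq (hx : ddx f z = ddx g z) (hy : ddy f z = ddy g z) :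
    fderiv ℂ f z = fderiv ℂ g z := by
  ext
  · exact hx
  · exact hy

theorem IsOpen.exists_eq_add_of_ddx_eq_of_ddy_eq (hU : IsOpen U) (hU' : IsPreconnected U)
    (hf : DifferentiableOn ℂ f U) (hg : DifferentiableOn ℂ g U)
    (hx : EqOn (ddx f) (ddx g) U) (hy : EqOn (ddy f) (ddy g) U) :
    ∃ c, EqOn f (g · + c) U :=
  hU.exists_eq_add_of_fderiv_eq hU' hf hg fun _ hz => fderiv_eq_of_ddx_eq_of_ddy_eq (hx hz) (hy hz)

theorem IsOpen.exists_eq_const_of_ddx_eq_zero_of_ddy_eq_zero (hU : IsOpen U)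
    (hU' : IsPreconnected U) (hf : DifferentiableOn ℂ f U)
    (hx : EqOn (ddx f) 0 U) (hy : EqOn (ddy f) 0 U) :
    ∃ c, ∀ z ∈ U, f z = c :=
  hU.exists_is_const_of_fderiv_eq_zero hU' hf fun _ hz => by
    simpa using fderiv_eq_of_ddx_eq_of_ddy_eq (g := 0) (by simpa [ddx] using hx hz)
      (by simpa [ddy] using hy hz)

theorem ContDiffOn.ddx_of_isOpen {m n : WithTop ℕ∞} (hf : ContDiffOn ℂ n f U) (hU : IsOpen U)
    (hmn : m + 1 ≤ n) : ContDiffOn ℂ m (ddx f) U :=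
  (hf.fderiv_of_isOpen hU hmn).clm_apply contDiffOn_const

theorem ContDiffOn.ddy_of_isOpen {m n : WithTop ℕ∞} (hf : ContDiffOn ℂ n f U) (hU : IsOpen U)
    (hmn : m + 1 ≤ n) : ContDiffOn ℂ m (ddy f) U :=
  (hf.fderiv_of_isOpen hU hmn).clm_apply contDiffOn_const

theorem ContDiffAt.ddx_ddy_comm (hf : ContDiffAt ℂ 2 f z) : ddx (ddy f) z = ddy (ddx f) z := by
  have hf' : DifferentiableAt ℂ (fderiv ℂ f) z :=
    (hf.fderiv_right (m := 1) le_rfl).differentiableAt one_ne_zero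
  have hdir (v w : ℂ × ℂ) :
      fderiv ℂ (fun y => fderiv ℂ f y v) z w = fderiv ℂ (fderiv ℂ f) z w v := by
    simp [fderiv_clm_apply hf' (differentiableAt_const v)]
  change fderiv ℂ (fun y => fderiv ℂ f y (0, 1)) z (1, 0)
    = fderiv ℂ (fun y => fderiv ℂ f y (1, 0)) z (0, 1)
  rw [hdir, hdir]
  exact hf.isSymmSndFDerivAt (by simp [minSmoothness_of_isRCLikeNormedField]) _ _

end PartialDerivatives

def III61Solution (a b c : ℂ) : ℂ × ℂ → ℂ := fun w => -a * w.2 + c - b * (w.1 + a) ^ 2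

section Solution

variable (a b c : ℂ)

theorem differentiable_III61Solution : Differentiable ℂ (III61Solution a b c) := by
  unfold III61Solution; fun_prop

theorem ddx_III61Solution : ddx (III61Solution a b c) = fun z => -(2 * b * (z.1 + a)) := by
  funext z
  rw [ddx_eq_deriv (differentiable_III61Solution a b c z)]
  simp [III61Solution]
  ring

theorem ddy_III61Solution : ddy (III61Solution a b c) = fun _ => -a := by
  funext z
  rw [ddy_eq_deriv (differentiable_III61Solution a b c z)]
  simp [III61Solution]

theorem III61Solution_pde (z : ℂ × ℂ) (hz : z.1 ≠ ddy (III61Solution a b c) z) :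
    ddx (ddx (III61Solution a b c)) z
        = ddx (III61Solution a b c) z / (z.1 - ddy (III61Solution a b c) z) ∧
      ddy (ddx (III61Solution a b c)) z = 0 ∧ ddy (ddy (III61Solution a b c)) z = 0 := by
  simp only [ddy_III61Solution, ddx_III61Solution, sub_neg_eq_add] at hz ⊢
  have hne : z.1 + a ≠ 0 := fun h => hz (eq_neg_of_add_eq_zero_left h)
  rw [ddx_eq_deriv (by fun_prop), ddy_eq_deriv (by fun_prop), ddy_eq_deriv (by fun_prop)]
  refine ⟨?_, by simp, by simp⟩
  rw [neg_div, mul_div_cancel_right₀ _ hne]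
  simp

end Solution

section Converse

variable {U : Set (ℂ × ℂ)}

theorem exists_ddy_eq_const (hU : IsOpen U) (hU' : IsPreconnected U) {u : ℂ × ℂ → ℂ}
    (hu : ContDiffOn ℂ 2 u U) (hxy : EqOn (ddy (ddx u)) 0 U) (hyy : EqOn (ddy (ddy u)) 0 U) :
    ∃ a, ∀ z ∈ U, ddy u z = a := by
  refine hU.exists_eq_const_of_ddx_eq_zero_of_ddy_eq_zero hU'
    ((hu.ddy_of_isOpen hU le_rfl).differentiableOn one_ne_zero) (fun z hz => ?_) hyy
  rw [(hu.contDiffAt (hU.mem_nhds hz)).ddx_ddy_comm]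
  exact hxy hz

theorem exists_eq_mul_of_ddx_eq_div (hU : IsOpen U) (hU' : IsPreconnected U) {w : ℂ × ℂ → ℂ}
    (hw : DifferentiableOn ℂ w U) {a : ℂ} (ha : ∀ z ∈ U, z.1 + a ≠ 0)
    (hx : EqOn (ddx w) (fun z => w z / (z.1 + a)) U) (hy : EqOn (ddy w) 0 U) :
    ∃ k, ∀ z ∈ U, w z = k * (z.1 + a) := by
  have hwz : ∀ z ∈ U, DifferentiableAt ℂ w z := fun z hz => hw.differentiableAt (hU.mem_nhds hz)
  have hq : ∀ z ∈ U, DifferentiableAt ℂ (fun z => w z / (z.1 + a)) z := fun z hz => by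
    have := hwz z hz; have := ha z hz; fun_prop (disch := assumption)
  have hqx : EqOn (ddx fun z => w z / (z.1 + a)) 0 U := fun z hz => by
    have hline : DifferentiableAt ℂ (fun x => w (x, z.2)) z.1 := (hwz z hz).comp z.1 (by fun_prop)
    rw [ddx_eq_deriv (hq z hz), deriv_fun_div hline (by fun_prop) (ha z hz),
      ← ddx_eq_deriv (hwz z hz), hx hz]
    simp [div_mul_cancel₀ _ (ha z hz)]
  have hqy : EqOn (ddy fun z => w z / (z.1 + a)) 0 U := fun z hz => by
    have hline : DifferentiableAt ℂ (fun y => w (z.1, y)) z.2 := (hwz z hz).comp z.2 (by fun_prop)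
    rw [ddy_eq_deriv (hq z hz)]
    dsimp only
    rw [deriv_div_const, ← ddy_eq_deriv (hwz z hz), hy hz]
    simp
  obtain ⟨k, hk⟩ := hU.exists_eq_const_of_ddx_eq_zero_of_ddy_eq_zero hU'
    (fun z hz => (hq z hz).differentiableWithinAt) hqx hqy
  exact ⟨k, fun z hz => by rw [← hk z hz, div_mul_cancel₀ _ (ha z hz)]⟩

theorem exists_eq_III61Solution (hU : IsOpen U) (hU' : IsPreconnected U) {u : ℂ × ℂ → ℂ}
    (hu : ContDiffOn ℂ 2 u U)
    (hpde : ∀ z ∈ U, z.1 ≠ ddy u z ∧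
      ddx (ddx u) z = ddx u z / (z.1 - ddy u z) ∧
      ddy (ddx u) z = 0 ∧ ddy (ddy u) z = 0) :
    ∃ a b c : ℂ, ∀ z ∈ U, u z = III61Solution a b c z := by
  obtain ⟨a, ha⟩ : ∃ a, ∀ z ∈ U, ddy u z = -a := by
    obtain ⟨a, ha⟩ := exists_ddy_eq_const hU hU' hu (fun z hz => (hpde z hz).2.2.1)
      (fun z hz => (hpde z hz).2.2.2)
    exact ⟨-a, by simpa using ha⟩
  have hne : ∀ z ∈ U, z.1 + a ≠ 0 := fun z hz h =>
    (hpde z hz).1 (by rw [ha z hz]; exact eq_neg_of_add_eq_zero_left h)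
  obtain ⟨k, hk⟩ := exists_eq_mul_of_ddx_eq_div hU hU'
    ((hu.ddx_of_isOpen hU le_rfl).differentiableOn one_ne_zero) hne
    (fun z hz => by rw [(hpde z hz).2.1, ha z hz, sub_neg_eq_add]) (fun z hz => (hpde z hz).2.2.1)
  obtain ⟨c, hc⟩ := hU.exists_eq_add_of_ddx_eq_of_ddy_eq hU' (hu.differentiableOn two_ne_zero)
    (differentiable_III61Solution a (-k / 2) 0).differentiableOn
    (fun z hz => by simp only [ddx_III61Solution, hk z hz]; ring)
    (fun z hz => by simp only [ddy_III61Solution, ha z hz])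
  refine ⟨a, -k / 2, c, fun z hz => ?_⟩
  rw [hc hz]
  simp only [III61Solution]
  ring

end Converse

/-- **General solution of model III.6-1:** `u = −ay + c − b(x+a)²` solves
`u_xx = u_x/(x − u_y)`, `u_xy = 0`, `u_yy = 0` wherever `x ≠ u_y`, and conversely every
local solution (on a connected open set) is of this form. -/
theorem III61_general_solution :
    (∀ a b c : ℂ, ∀ z : ℂ × ℂ,
      z.1 ≠ ddy (fun w => -a * w.2 + c - b * (w.1 + a) ^ 2) z →
        (ddx (ddx (fun w => -a * w.2 + c - b * (w.1 + a) ^ 2)) z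
            = ddx (fun w => -a * w.2 + c - b * (w.1 + a) ^ 2) z
              / (z.1 - ddy (fun w => -a * w.2 + c - b * (w.1 + a) ^ 2) z) ∧
          ddy (ddx (fun w => -a * w.2 + c - b * (w.1 + a) ^ 2)) z = 0 ∧
          ddy (ddy (fun w => -a * w.2 + c - b * (w.1 + a) ^ 2)) z = 0)) ∧
    (∀ (U : Set (ℂ × ℂ)), IsOpen U → IsPreconnected U →
      ∀ u : ℂ × ℂ → ℂ, ContDiffOn ℂ ⊤ u U →
        (∀ z ∈ U, z.1 ≠ ddy u z ∧
          ddx (ddx u) z = ddx u z / (z.1 - ddy u z) ∧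
          ddy (ddx u) z = 0 ∧ ddy (ddy u) z = 0) →
        ∃ a b c : ℂ, ∀ z ∈ U, u z = -a * z.2 + c - b * (z.1 + a) ^ 2) :=
  ⟨III61Solution_pde, fun _ hU hU' _ hu hpde =>
    exists_eq_III61Solution hU hU' (hu.of_le le_top) hpde⟩
end

section
/- Let a be the 7-dimensional graded Lie algebra with basis T_1, T_2, E_1, E_2, F_1, F_2, U and nonzero brackets among generators given by: [T_1,E_1]=−E_1, [T_1,E_2]=−E_2, [T_1,F_1]=F_1, [T_1,F_2]=F_2, [T_2,E_1]=−E_1, [T_2,E_2]=−3E_2, [T_2,F_1]=−F_1, [T_2,F_2]=F_2, [T_2,U]=−2U, [E_1,F_1]=U, [E_2,F_2]=U. Suppose a bracket on the same vector space agrees with these relations and additionally has [E_1,F_2] = aT_1 + bT_2, [F_2,U] = cF_1 (all other brackets of basis vectors zero except as forced). Then the Jacobi identity forces a = b = c = 0. -/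
/-- The candidate deformed bracket on the 7-dimensional space with basis
`(T_1, T_2, E_1, E_2, F_1, F_2, U)` (coordinates `0,…,6`), extended bilinearly and
antisymmetrically from the bracket relations
`[T_1,E_1]=−E_1, [T_1,E_2]=−E_2, [T_1,F_1]=F_1, [T_1,F_2]=F_2,
[T_2,E_1]=−E_1, [T_2,E_2]=−3E_2, [T_2,F_1]=−F_1, [T_2,F_2]=F_2, [T_2,U]=−2U,
[E_1,F_1]=U, [E_2,F_2]=U` together with the deformation terms
`[E_1,F_2] = aT_1 + bT_2` and `[F_2,U] = cF_1` (all other brackets of basis vectors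
zero). -/
def defBr (a b c : ℂ) (v w : Fin 7 → ℂ) : Fin 7 → ℂ :=
  ![a * (v 2 * w 5 - v 5 * w 2),
    b * (v 2 * w 5 - v 5 * w 2),
    -(v 0 * w 2 - v 2 * w 0) - (v 1 * w 2 - v 2 * w 1),
    -(v 0 * w 3 - v 3 * w 0) - 3 * (v 1 * w 3 - v 3 * w 1),
    (v 0 * w 4 - v 4 * w 0) - (v 1 * w 4 - v 4 * w 1) + c * (v 5 * w 6 - v 6 * w 5),
    (v 0 * w 5 - v 5 * w 0) + (v 1 * w 5 - v 5 * w 1),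
    -2 * (v 1 * w 6 - v 6 * w 1) + (v 2 * w 4 - v 4 * w 2) + (v 3 * w 5 - v 5 * w 3)]

/-- **No nontrivial filtered deformations in type III:** if the deformed bracket
satisfies the Jacobi identity, then the deformation parameters vanish,
`a = b = c = 0`. -/
theorem typeIII_deformation_trivial (a b c : ℂ)
    (jacobi : ∀ u v w : Fin 7 → ℂ,
      defBr a b c u (defBr a b c v w) + defBr a b c v (defBr a b c w u)
        + defBr a b c w (defBr a b c u v) = 0) :
    a = 0 ∧ b = 0 ∧ c = 0 := by
  have h1 : -((0:ℂ) * (-((0:ℂ) * (0:ℂ) - (1:ℂ) * (0:ℂ)) - 3 * ((0:ℂ) * (0:ℂ) - (1:ℂ) * (0:ℂ))) - (0:ℂ) * (a * ((0:ℂ) * (1:ℂ) - (0:ℂ) * (0:ℂ)))) - 3 * ((0:ℂ) * (-((0:ℂ) * (0:ℂ) - (1:ℂ) * (0:ℂ)) - 3 * ((0:ℂ) * (0:ℂ) - (1:ℂ) * (0:ℂ))) - (0:ℂ) * (b * ((0:ℂ) * (1:ℂ) - (0:ℂ) * (0:ℂ)))) + (-((0:ℂ) * (-((0:ℂ) * (0:ℂ)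 - (0:ℂ) * (0:ℂ)) - 3 * ((0:ℂ) * (0:ℂ) - (0:ℂ) * (0:ℂ))) - (1:ℂ) * (a * ((0:ℂ) * (0:ℂ) - (1:ℂ) * (1:ℂ)))) - 3 * ((0:ℂ) * (-((0:ℂ) * (0:ℂ) - (0:ℂ) * (0:ℂ)) - 3 * ((0:ℂ) * (0:ℂ) - (0:ℂ) * (0:ℂ))) - (1:ℂ) * (b * ((0:ℂ) * (0:ℂ) - (1:ℂ) * (1:ℂ))))) + (-((0:ℂ) * (-((0:ℂ) * (1:ℂ) - (0:ℂ) * (0:ℂ)) - 3 * ((0:ℂ) * (1:ℂ) - (0:ℂ) * (0:ℂ))) - (0:ℂ) * (a * ((1:ℂ) * (0:ℂ) - (0:ℂ) * (0:ℂ)))) - 3 * ((0:ℂ) * (-((0:ℂ) * (1:ℂ) - (0:ℂ) * (0:ℂ)) - 3 * ((0:ℂ) * (1:ℂ) - (0:ℂ) * (0:ℂ))) - (0:ℂ) * (b * ((1:ℂ) * (0:ℂ) - (0:ℂ) * (0:ℂ))))) = 0 :=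
    congrFun (jacobi ![0,0,1,0,0,0,0] ![0,0,0,1,0,0,0] ![0,0,0,0,0,1,0]) 3
  have h2 : ((0:ℂ) * (((0:ℂ) * (0:ℂ) - (1:ℂ) * (0:ℂ)) - ((0:ℂ) * (0:ℂ) - (1:ℂ) * (0:ℂ)) + c * ((0:ℂ) * (0:ℂ) - (0:ℂ) * (1:ℂ))) - (0:ℂ) * (a * ((0:ℂ) * (1:ℂ) - (0:ℂ) * (0:ℂ)))) - ((0:ℂ) * (((0:ℂ) * (0:ℂ) - (1:ℂ) * (0:ℂ)) - ((0:ℂ) * (0:ℂ) - (1:ℂ) * (0:ℂ)) + c * ((0:ℂ) * (0:ℂ) - (0:ℂ) * (1:ℂ))) - (0:ℂ) * (b * ((0:ℂ) * (1:ℂ) - (0:ℂ) * (0:ℂ)))) + c * ((0:ℂ) * (-2 * ((0:ℂ) * (0:ℂ) - (0:ℂ) * (0:ℂ)) + ((0:ℂ) * (0:ℂ) - (1:ℂ) * (0:ℂ)) + ((0:ℂ) * (1:ℂ) - (0:ℂ) * (0:ℂ))) - (0:ℂ) * (((0:ℂ) * (1:ℂ) - (0:ℂ) * (0:ℂ)) +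 ((0:ℂ) * (1:ℂ) - (0:ℂ) * (0:ℂ)))) + (((0:ℂ) * (((0:ℂ) * (0:ℂ) - (0:ℂ) * (0:ℂ)) - ((0:ℂ) * (0:ℂ) - (0:ℂ) * (0:ℂ)) + c * ((1:ℂ) * (0:ℂ) - (0:ℂ) * (0:ℂ))) - (1:ℂ) * (a * ((0:ℂ) * (0:ℂ) - (1:ℂ) * (1:ℂ)))) - ((0:ℂ) * (((0:ℂ) * (0:ℂ) - (0:ℂ) * (0:ℂ)) - ((0:ℂ) * (0:ℂ) - (0:ℂ) * (0:ℂ)) + c * ((1:ℂ) * (0:ℂ) - (0:ℂ) * (0:ℂ))) - (1:ℂ) * (b * ((0:ℂ) * (0:ℂ) - (1:ℂ) * (1:ℂ)))) + c * ((0:ℂ) * (-2 * ((0:ℂ) * (0:ℂ) - (0:ℂ) * (0:ℂ)) + ((0:ℂ) * (0:ℂ) - (0:ℂ) * (1:ℂ)) + ((0:ℂ) * (0:ℂ) - (1:ℂ) * (0:ℂ))) - (0:ℂ) * (((0:ℂ) * (0:ℂ) - (1:ℂ) * (0:ℂ)) + ((0:ℂ) * (0:ℂ) - (1:ℂ) *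 (0:ℂ))))) + (((0:ℂ) * (((0:ℂ) * (1:ℂ) - (0:ℂ) * (0:ℂ)) - ((0:ℂ) * (1:ℂ) - (0:ℂ) * (0:ℂ)) + c * ((0:ℂ) * (0:ℂ) - (0:ℂ) * (0:ℂ))) - (0:ℂ) * (a * ((1:ℂ) * (0:ℂ) - (0:ℂ) * (0:ℂ)))) - ((0:ℂ) * (((0:ℂ) * (1:ℂ) - (0:ℂ) * (0:ℂ)) - ((0:ℂ) * (1:ℂ) - (0:ℂ) * (0:ℂ)) + c * ((0:ℂ) * (0:ℂ) - (0:ℂ) * (0:ℂ))) - (0:ℂ) * (b * ((1:ℂ) * (0:ℂ) - (0:ℂ) * (0:ℂ)))) + c * ((1:ℂ) * (-2 * ((0:ℂ) * (0:ℂ) - (0:ℂ) * (0:ℂ)) + ((1:ℂ) * (1:ℂ) - (0:ℂ) * (0:ℂ)) + ((0:ℂ) * (0:ℂ) - (0:ℂ) * (0:ℂ))) - (0:ℂ) * (((0:ℂ) * (0:ℂ) - (0:ℂ) * (0:ℂ)) + ((0:ℂ) * (0:ℂ) - (0:ℂ) * (0:ℂ))))) = 0 :=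
    congrFun (jacobi ![0,0,1,0,0,0,0] ![0,0,0,0,1,0,0] ![0,0,0,0,0,1,0]) 4
  have h3 : -2 * ((0:ℂ) * (-2 * ((0:ℂ) * (1:ℂ) - (0:ℂ) * (0:ℂ)) + ((0:ℂ) * (0:ℂ) - (0:ℂ) * (0:ℂ)) + ((0:ℂ) * (0:ℂ) - (1:ℂ) * (0:ℂ))) - (0:ℂ) * (b * ((0:ℂ) * (0:ℂ) - (1:ℂ) * (0:ℂ)))) + ((1:ℂ) * (((0:ℂ) * (0:ℂ) - (0:ℂ) * (0:ℂ)) - ((0:ℂ) * (0:ℂ) - (0:ℂ) * (0:ℂ)) + c * ((1:ℂ) * (1:ℂ) - (0:ℂ) * (0:ℂ))) - (0:ℂ) * (-((0:ℂ) * (0:ℂ) - (0:ℂ) * (0:ℂ)) - ((0:ℂ) * (0:ℂ) - (0:ℂ) * (0:ℂ)))) + ((0:ℂ) * (((0:ℂ) * (0:ℂ) - (1:ℂ) * (0:ℂ)) + ((0:ℂ) * (0:ℂ) - (1:ℂ) * (0:ℂ))) - (0:ℂ) * (-((0:ℂ) * (0:ℂ) - (0:ℂ) * (0:ℂ)) -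 3 * ((0:ℂ) * (0:ℂ) - (0:ℂ) * (0:ℂ)))) + (-2 * ((0:ℂ) * (-2 * ((0:ℂ) * (0:ℂ) - (1:ℂ) * (0:ℂ)) + ((0:ℂ) * (0:ℂ) - (0:ℂ) * (1:ℂ)) + ((0:ℂ) * (0:ℂ) - (0:ℂ) * (0:ℂ))) - (0:ℂ) * (b * ((0:ℂ) * (0:ℂ) - (0:ℂ) * (1:ℂ)))) + ((0:ℂ) * (((0:ℂ) * (0:ℂ) - (0:ℂ) * (0:ℂ)) - ((0:ℂ) * (0:ℂ) - (0:ℂ) * (0:ℂ)) + c * ((0:ℂ) * (0:ℂ) - (1:ℂ) * (0:ℂ))) - (0:ℂ) * (-((0:ℂ) * (1:ℂ) - (0:ℂ) * (0:ℂ)) - ((0:ℂ) * (1:ℂ) - (0:ℂ) * (0:ℂ)))) + ((0:ℂ) * (((0:ℂ) * (0:ℂ) - (0:ℂ) * (0:ℂ)) + ((0:ℂ) * (0:ℂ) - (0:ℂ) * (0:ℂ))) - (1:ℂ) * (-((0:ℂ) * (0:ℂ) - (0:ℂ) * (0:ℂ)) - 3 * ((0:ℂ) * (0:ℂ) - (0:ℂ)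 * (0:ℂ))))) + (-2 * ((0:ℂ) * (-2 * ((0:ℂ) * (0:ℂ) - (0:ℂ) * (0:ℂ)) + ((1:ℂ) * (0:ℂ) - (0:ℂ) * (0:ℂ)) + ((0:ℂ) * (1:ℂ) - (0:ℂ) * (0:ℂ))) - (1:ℂ) * (b * ((1:ℂ) * (1:ℂ) - (0:ℂ) * (0:ℂ)))) + ((0:ℂ) * (((0:ℂ) * (0:ℂ) - (0:ℂ) * (0:ℂ)) - ((0:ℂ) * (0:ℂ) - (0:ℂ) * (0:ℂ)) + c * ((0:ℂ) * (0:ℂ) - (0:ℂ) * (1:ℂ))) - (0:ℂ) * (-((0:ℂ) * (0:ℂ) - (1:ℂ) * (0:ℂ)) - ((0:ℂ) * (0:ℂ) - (1:ℂ) * (0:ℂ)))) + ((0:ℂ) * (((0:ℂ) * (1:ℂ) - (0:ℂ) * (0:ℂ)) + ((0:ℂ) * (1:ℂ) - (0:ℂ) * (0:ℂ))) - (0:ℂ) * (-((0:ℂ) * (0:ℂ) - (0:ℂ) * (0:ℂ)) - 3 * ((0:ℂ) * (0:ℂ) - (0:ℂ) * (0:ℂ))))) = 0 :=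
    congrFun (jacobi ![0,0,1,0,0,0,0] ![0,0,0,0,0,1,0] ![0,0,0,0,0,0,1]) 6
  have hb : b = 0 := by linear_combination (h3 - h1 - h2) / 6
  have ha : a = 0 := by linear_combination -h1 - 3 * hb
  have hc : c = 0 := by linear_combination h3 - 2 * hb
  exact ⟨ha, hb, hc⟩
end
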